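/- Let R be an invertible n²×n² complex matrix. If there exists an invertible n×n matrix μ such that (PR, μ) is an enhanced R-matrix in the sense of Definition 2, then R is biinvertible and VU = I, where U and V are the n×n matrices built from R̃ = ((R^{t₂})⁻¹)^{t₂}. Likewise, if there exists an invertible n×n matrix ν such that (RP, ν) is an enhanced R-matrix in the sense of Definition 2, then R is biinvertible and VU = I. -/

import Mathlib

open scoped BigOperators

namespace Enhance

noncomputable section

/-- n×n complex matrices. -/
abbrev Mat1 (n : ℕ) := Matrix (Fin n) (Fin n) ℂ

/-- n²×n² complex matrices, indexed by pairs. -/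
abbrev Mat2 (n : ℕ) := Matrix (Fin n × Fin n) (Fin n × Fin n) ℂ

/-- n³×n³ complex matrices, indexed by triples. -/
abbrev Mat3 (n : ℕ) := Matrix (Fin n × Fin n × Fin n) (Fin n × Fin n × Fin n) ℂ

/-- Kronecker product of two n×n matrices: (μ⊗ν)^{ab}_{cd} = μ^a_c ν^b_d. -/
def kron {n : ℕ} (μ ν : Mat1 n) : Mat2 n :=
  Matrix.of fun p q => μ p.1 q.1 * ν p.2 q.2

/-- The permutation matrix P^{ab}_{cd} = δ^a_d δ^b_c. -/
def Pmat (n : ℕ) : Mat2 n :=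
  Matrix.of fun p q => if p.1 = q.2 ∧ p.2 = q.1 then 1 else 0

/-- A₁₂ = A ⊗ I. -/
def A12 {n : ℕ} (A : Mat2 n) : Mat3 n :=
  Matrix.of fun p q => A (p.1, p.2.1) (q.1, q.2.1) * (if p.2.2 = q.2.2 then 1 else 0)

/-- A₂₃ = I ⊗ A. -/
def A23 {n : ℕ} (A : Mat2 n) : Mat3 n :=
  Matrix.of fun p q => (if p.1 = q.1 then 1 else 0) * A (p.2.1, p.2.2) (q.2.1, q.2.2)

/-- (A₁₃)^{abc}_{def} = A^{ac}_{df} δ^b_e. -/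
def A13 {n : ℕ} (A : Mat2 n) : Mat3 n :=
  Matrix.of fun p q => A (p.1, p.2.2) (q.1, q.2.2) * (if p.2.1 = q.2.1 then 1 else 0)

/-- First partial transpose: (A^{t₁})^{ab}_{cd} = A^{cb}_{ad}. -/
def t1 {n : ℕ} (A : Mat2 n) : Mat2 n :=
  Matrix.of fun p q => A (q.1, p.2) (p.1, q.2)

/-- Second partial transpose: (A^{t₂})^{ab}_{cd} = A^{ad}_{cb}. -/
def t2 {n : ℕ} (A : Mat2 n) : Mat2 n :=
  Matrix.of fun p q => A (p.1, q.2) (q.1, p.2)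

/-- Second partial trace: Tr₂(A)^a_c = Σ_d A^{ad}_{cd}. -/
def Tr2 {n : ℕ} (A : Mat2 n) : Mat1 n :=
  Matrix.of fun a c => ∑ d, A (a, d) (c, d)

/-- The quantum Yang–Baxter equation R₁₂R₁₃R₂₃ = R₂₃R₁₃R₁₂. -/
def QYB {n : ℕ} (R : Mat2 n) : Prop :=
  A12 R * A13 R * A23 R = A23 R * A13 R * A12 R

/-- The braid equation S₁₂S₂₃S₁₂ = S₂₃S₁₂S₂₃. -/
def Braid {n : ℕ} (S : Mat2 n) : Prop :=
  A12 S * A23 S * A12 S = A23 S * A12 S * A23 S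

/-- R is biinvertible if both R and R^{t₂} are invertible. -/
def Biinv {n : ℕ} (R : Mat2 n) : Prop :=
  IsUnit R ∧ IsUnit (t2 R)

/-- R̃ = ((R^{t₂})⁻¹)^{t₂}. -/
noncomputable def Rtil {n : ℕ} (R : Mat2 n) : Mat2 n := t2 (t2 R)⁻¹

/-- U^i_j = Σ_a R̃^{ai}_{ja}. -/
noncomputable def Umat {n : ℕ} (R : Mat2 n) : Mat1 n :=
  Matrix.of fun i j => ∑ a, Rtil R (a, i) (j, a)

/-- V^i_j = Σ_a R̃^{ia}_{aj}. -/
noncomputable def Vmat {n : ℕ} (R : Mat2 n) : Mat1 n :=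
  Matrix.of fun i j => ∑ a, Rtil R (i, a) (a, j)

/-- Enhanced R-matrix in the sense of Definition 2 (Turaev, tangle category version). -/
def IsEnhanced2 {n : ℕ} (S : Mat2 n) (μ : Mat1 n) : Prop :=
  IsUnit S ∧ IsUnit μ ∧ Braid S ∧
  S * kron μ μ = kron μ μ * S ∧
  Tr2 (S * kron 1 μ) = 1 ∧ Tr2 (S⁻¹ * kron 1 μ) = 1 ∧
  t1 (Pmat n * S⁻¹) * kron 1 μ * t1 (S * Pmat n) * kron 1 μ⁻¹ = 1 ∧
  t1 (Pmat n * S) * kron 1 μ * t1 (S⁻¹ * Pmat n) * kron 1 μ⁻¹ = 1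

/-- Enhanced R-matrix in the sense of Definition 1 (Turaev, link invariant version). -/
def IsEnhanced1 {n : ℕ} (S : Mat2 n) (μ : Mat1 n) (α β : ℂ) : Prop :=
  IsUnit S ∧ α ≠ 0 ∧ β ≠ 0 ∧ Braid S ∧
  S * kron μ μ = kron μ μ * S ∧
  Tr2 (S * kron μ μ) = (α * β) • μ ∧
  Tr2 (S⁻¹ * kron μ μ) = (α⁻¹ * β) • μ


/-! Write `vec` for the vectorisation of n×n matrices. The partial-trace conditions
Tr₂(S^{±1}(I⊗μ)) = I say that t₁(R) or t₁(R⁻¹) sends `vec μ` to `vec I` (acting on columns or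
on rows), and the zigzag condition of Definition 2 turns the one statement for t₁(R⁻¹) into the
corresponding one for t₁(R) with μ replaced by μ⁻¹; it also shows that t₁(R), hence
t₂(R) = t₁(R)ᵀ, is invertible. Since t₁(R̃) = (t₁ R)⁻¹, the matrices U and V are (t₁ R)⁻¹ applied
to `vec I` on columns and on rows respectively, which gives U = μ, V = μ⁻¹ for S = PR and
U = ν⁻¹, V = ν for S = RP. -/

open Matrix
open scoped Kronecker

variable {n : ℕ}

lemma kron_eq_kronecker (μ ν : Mat1 n) : kron μ ν = μ ⊗ₖ ν := rfl

lemma Pmat_mul_Pmat : Pmat n * Pmat n = 1 := by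
  ext ⟨a, b⟩ ⟨c, d⟩
  simp [Pmat, mul_apply, Fintype.sum_prod_type, one_apply, ite_and]

lemma inv_Pmat : (Pmat n)⁻¹ = Pmat n := inv_eq_left_inv Pmat_mul_Pmat

lemma t1_t2 (A : Mat2 n) : t1 (t2 A) = Aᵀ := rfl

lemma transpose_t2 (A : Mat2 n) : (t2 A)ᵀ = t1 A := rfl

lemma t1_Rtil (R : Mat2 n) : t1 (Rtil R) = (t1 R)⁻¹ := by
  rw [Rtil, t1_t2, transpose_nonsing_inv, transpose_t2]

-- `vec A (j, i) = A i j` stacks columns, so `vec μᵀ` is the row-major vectorisation of `μ`.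
lemma vec_Umat (R : Mat2 n) : vec (Umat R) = (t1 R)⁻¹ *ᵥ vec 1 := by
  ext ⟨j, i⟩
  rw [← t1_Rtil]
  simp [Umat, t1, mulVec, dotProduct, Fintype.sum_prod_type, one_apply]

lemma vec_transpose_Vmat (R : Mat2 n) : vec (Vmat R)ᵀ = vec 1 ᵥ* (t1 R)⁻¹ := by
  ext ⟨i, j⟩
  rw [← t1_Rtil]
  simp [Vmat, t1, vecMul, dotProduct, Fintype.sum_prod_type, one_apply]

lemma t1_mulVec_vec (A : Mat2 n) (μ : Mat1 n) :
    t1 A *ᵥ vec μ = vec (Tr2 (Pmat n * A * kron 1 μ)) := by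
  ext ⟨c, a⟩
  simp [t1, Tr2, Pmat, kron, mulVec, dotProduct, mul_apply, Fintype.sum_prod_type, one_apply,
    ite_and]

lemma vec_transpose_vecMul_t1 (μ : Mat1 n) (A : Mat2 n) :
    vec μᵀ ᵥ* t1 A = vec (Tr2 (A * Pmat n * kron 1 μ))ᵀ := by
  ext ⟨i, j⟩
  rw [vecMul, dotProduct, Fintype.sum_prod_type, Finset.sum_comm]
  simp [t1, Tr2, Pmat, kron, mul_apply, Fintype.sum_prod_type, one_apply, ite_and, mul_comm]

lemma kron_one_mulVec_vec_one (μ : Mat1 n) : kron 1 μ *ᵥ vec 1 = vec μ := by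
  rw [kron_eq_kronecker, kronecker_mulVec_vec, mul_one, transpose_one, mul_one]

lemma vec_one_vecMul_kron_one (μ : Mat1 n) : vec 1 ᵥ* kron 1 μ = vec μᵀ := by
  rw [kron_eq_kronecker, vec_vecMul_kronecker, mul_one, mul_one]

lemma isUnit_t2_iff (A : Mat2 n) : IsUnit (t2 A) ↔ IsUnit (t1 A) := by
  rw [← isUnit_transpose, transpose_t2]

lemma Umat_eq_of_t1_mulVec {R : Mat2 n} {μ : Mat1 n} (hR : IsUnit (t1 R))
    (h : t1 R *ᵥ vec μ = vec 1) : Umat R = μ := by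
  rw [← vec_inj, vec_Umat, ← h, mulVec_mulVec,
    nonsing_inv_mul _ ((isUnit_iff_isUnit_det _).mp hR), one_mulVec]

lemma Vmat_eq_of_vecMul_t1 {R : Mat2 n} {μ : Mat1 n} (hR : IsUnit (t1 R))
    (h : vec μᵀ ᵥ* t1 R = vec 1) : Vmat R = μ := by
  rw [← transpose_inj, ← vec_inj, vec_transpose_Vmat, ← h, vecMul_vecMul,
    mul_nonsing_inv _ ((isUnit_iff_isUnit_det _).mp hR), vecMul_one]

lemma vecMul_eq_vec_one_of_zigzag {A B : Mat2 n} {μ ν : Mat1 n}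
    (hAB : A * kron 1 μ * B * kron 1 ν = 1) (hB : vec μᵀ ᵥ* B = vec 1) :
    vec νᵀ ᵥ* A = vec 1 := by
  have hBA : kron 1 μ * B * kron 1 ν * A = 1 := by
    rw [mul_eq_one_comm]
    simpa only [mul_assoc] using hAB
  calc vec νᵀ ᵥ* A = vec 1 ᵥ* (kron 1 μ * B * kron 1 ν * A) := by
        rw [← vecMul_vecMul, ← vecMul_vecMul, ← vecMul_vecMul, vec_one_vecMul_kron_one, hB,
          vec_one_vecMul_kron_one]
    _ = vec 1 := by rw [hBA, vecMul_one]

lemma mulVec_eq_vec_one_of_zigzag {A B : Mat2 n} {μ ν : Mat1 n}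
    (hBA : B * kron 1 μ * A * kron 1 ν = 1) (hB : B *ᵥ vec μ = vec 1) :
    A *ᵥ vec ν = vec 1 := by
  have hAB : A * kron 1 ν * B * kron 1 μ = 1 := by
    rw [mul_assoc, mul_eq_one_comm]
    simpa only [mul_assoc] using hBA
  calc A *ᵥ vec ν = (A * kron 1 ν * B * kron 1 μ) *ᵥ vec 1 := by
        rw [← mulVec_mulVec, kron_one_mulVec_vec_one, ← mulVec_mulVec, hB, ← mulVec_mulVec,
          kron_one_mulVec_vec_one]
    _ = vec 1 := by rw [hAB, one_mulVec]

theorem IsEnhanced2.biinv_and_Vmat_mul_Umat_of_Pmat_mul {R : Mat2 n} {μ : Mat1 n}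
    (hR : IsUnit R) (h : IsEnhanced2 (Pmat n * R) μ) : Biinv R ∧ Vmat R * Umat R = 1 := by
  obtain ⟨-, hμ, -, -, htr, htr_inv, -, hzig⟩ := h
  have hS_inv : (Pmat n * R)⁻¹ = R⁻¹ * Pmat n := by rw [Matrix.mul_inv_rev, inv_Pmat]
  replace htr_inv : Tr2 (R⁻¹ * Pmat n * kron 1 μ) = 1 := by rwa [hS_inv] at htr_inv
  replace hzig : t1 R * kron 1 μ * t1 R⁻¹ * kron 1 μ⁻¹ = 1 := by
    rwa [hS_inv, ← mul_assoc, Pmat_mul_Pmat, one_mul, mul_assoc R⁻¹, Pmat_mul_Pmat,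
      mul_one] at hzig
  have ht1R : IsUnit (t1 R) := IsUnit.of_mul_eq_one _ (by simpa only [mul_assoc] using hzig)
  have hU : Umat R = μ := Umat_eq_of_t1_mulVec ht1R (by rw [t1_mulVec_vec, htr])
  have hV : Vmat R = μ⁻¹ := Vmat_eq_of_vecMul_t1 ht1R <|
    vecMul_eq_vec_one_of_zigzag hzig (by rw [vec_transpose_vecMul_t1, htr_inv, transpose_one])
  refine ⟨⟨hR, (isUnit_t2_iff R).mpr ht1R⟩, ?_⟩
  rw [hV, hU, nonsing_inv_mul _ ((isUnit_iff_isUnit_det _).mp hμ)]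

theorem IsEnhanced2.biinv_and_Vmat_mul_Umat_of_mul_Pmat {R : Mat2 n} {ν : Mat1 n}
    (hR : IsUnit R) (h : IsEnhanced2 (R * Pmat n) ν) : Biinv R ∧ Vmat R * Umat R = 1 := by
  obtain ⟨-, hν, -, -, htr, htr_inv, hzig, -⟩ := h
  have hS_inv : (R * Pmat n)⁻¹ = Pmat n * R⁻¹ := by rw [Matrix.mul_inv_rev, inv_Pmat]
  replace htr_inv : Tr2 (Pmat n * R⁻¹ * kron 1 ν) = 1 := by rwa [hS_inv] at htr_inv
  replace hzig : t1 R⁻¹ * kron 1 ν * t1 R * kron 1 ν⁻¹ = 1 := by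
    rwa [hS_inv, ← mul_assoc, Pmat_mul_Pmat, one_mul, mul_assoc R, Pmat_mul_Pmat,
      mul_one] at hzig
  have ht1R : IsUnit (t1 R) := by
    refine IsUnit.of_mul_eq_one (kron 1 ν⁻¹ * (t1 R⁻¹ * kron 1 ν)) ?_
    rw [← mul_assoc, mul_eq_one_comm]
    simpa only [mul_assoc] using hzig
  have hV : Vmat R = ν :=
    Vmat_eq_of_vecMul_t1 ht1R (by rw [vec_transpose_vecMul_t1, htr, transpose_one])
  have hU : Umat R = ν⁻¹ := Umat_eq_of_t1_mulVec ht1R <|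
    mulVec_eq_vec_one_of_zigzag hzig (by rw [t1_mulVec_vec, htr_inv])
  refine ⟨⟨hR, (isUnit_t2_iff R).mpr ht1R⟩, ?_⟩
  rw [hV, hU, mul_nonsing_inv _ ((isUnit_iff_isUnit_det _).mp hν)]

theorem enhancement_necessary_general (n : ℕ) (R : Mat2 n)
    (hR : IsUnit R) :
    (∀ μ : Mat1 n, IsEnhanced2 (Pmat n * R) μ →
      Biinv R ∧ Vmat R * Umat R = 1) ∧
    (∀ ν : Mat1 n, IsEnhanced2 (R * Pmat n) ν →
      Biinv R ∧ Vmat R * Umat R = 1) :=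
  ⟨fun _ h => h.biinv_and_Vmat_mul_Umat_of_Pmat_mul hR,
    fun _ h => h.biinv_and_Vmat_mul_Umat_of_mul_Pmat hR⟩

theorem enhancement_necessary (n : ℕ) (hn : 1 ≤ n) (R : Mat2 n)
    (hR : IsUnit R) :
    (∀ μ : Mat1 n, IsEnhanced2 (Pmat n * R) μ →
      Biinv R ∧ Vmat R * Umat R = 1) ∧
    (∀ ν : Mat1 n, IsEnhanced2 (R * Pmat n) ν →
      Biinv R ∧ Vmat R * Umat R = 1) :=
  enhancement_necessary_general n R hR

end

end Enhance
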